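/- arXiv:2102.05213 — 2 statements merged into one kernel-verified Lean document; each statement's English description precedes it below -/
import Mathlib

section
/- Let ρ₀ be a smooth function on the torus T², odd in x₂, and let (ρ,u,p) be a global smooth solution of the IPM system on T² with ρ(·,0) = ρ₀ such that ρ(·,t) is odd in x₂ for every t ≥ 0. Define E(t) = ∫_{[−π,π]²} x₂ ρ(x,t) dx. Then for every t ≥ 0, E'(t) = −∫_{[−π,π]²} |u(x,t)|² dx; in particular E is nonincreasing, and ∫₀^∞ ∫_{[−π,π]²} |u(x,t)|² dx dt ≤ E(0) + 2π³ sup|ρ₀|. -/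
open Real MeasureTheory Filter Topology
open scoped ENNReal NNReal

noncomputable section

/-- Points of the plane `ℝ²`; functions on the torus `T² = [-π,π)²` are identified with
`2π`-periodic (in both variables) functions on `ℝ²`. -/
abbrev Pt : Type := ℝ × ℝ

/-- `2π`-periodicity in both variables. -/
def Per2 (f : Pt → ℝ) : Prop :=
  ∀ x : Pt, f (x.1 + 2 * π, x.2) = f x ∧ f (x.1, x.2 + 2 * π) = f x

/-- Partial derivative in the first space variable. -/
def pd1 (f : Pt → ℝ) (x : Pt) : ℝ := deriv (fun y => f (y, x.2)) x.1

/-- Partial derivative in the second space variable. -/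
def pd2 (f : Pt → ℝ) (x : Pt) : ℝ := deriv (fun y => f (x.1, y)) x.2

/-- The fundamental domain `[-π,π]²` of the torus. -/
def Q2 : Set Pt := Set.Icc (-π) π ×ˢ Set.Icc (-π) π

/-- Fourier coefficient on the torus: `f̂(k) = (2π)⁻² ∫_{[-π,π]²} e^{-ik·x} f(x) dx`. -/
def tcoef (f : Pt → ℝ) (k : ℤ × ℤ) : ℂ :=
  (((2 * π) ^ 2 : ℝ))⁻¹ *
    ∫ x in Q2, Complex.exp (-Complex.I * (((k.1 : ℝ) * x.1 + (k.2 : ℝ) * x.2 : ℝ) : ℂ)) * (f x : ℂ)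

/-- Homogeneous Sobolev norm on the torus (valued in `ℝ≥0∞`):
`‖f‖_{Ḣ^s(T²)}² = (2π)² Σ_{k ≠ 0} |k|^{2s} |f̂(k)|²`; note `|k|^{2s} = (k₁² + k₂²)^s`. -/
def sobT2 (s : ℝ) (f : Pt → ℝ) : ℝ≥0∞ :=
  (ENNReal.ofReal ((2 * π) ^ 2) *
    ∑' k : ℤ × ℤ, (if k = 0 then 0 else
      ENNReal.ofReal ((((k.1 : ℝ) ^ 2 + (k.2 : ℝ) ^ 2)) ^ s) * (‖tcoef f k‖₊ : ℝ≥0∞) ^ 2))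
    ^ (1/2 : ℝ)

/-- Inhomogeneous Sobolev norm on the torus (valued in `ℝ≥0∞`):
`‖f‖_{H^k(T²)}² = (2π)² Σ_{k'} (1 + |k'|²)^k |f̂(k')|²`. -/
def hsobT2 (k : ℝ) (f : Pt → ℝ) : ℝ≥0∞ :=
  (ENNReal.ofReal ((2 * π) ^ 2) *
    ∑' m : ℤ × ℤ,
      ENNReal.ofReal ((1 + (m.1 : ℝ) ^ 2 + (m.2 : ℝ) ^ 2) ^ k) * (‖tcoef f m‖₊ : ℝ≥0∞) ^ 2)
    ^ (1/2 : ℝ)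

/-- A global smooth solution of the IPM system on the torus `T²`:
`∂_t ρ + u·∇ρ = 0`, `∇·u = 0`, `u + ∇p = -(0,ρ)` for all `t ≥ 0`, with `ρ, u, p` smooth on
`ℝ² × [0,∞)` and `2π`-periodic in both space variables. -/
structure IsIPMSolT2 (ρ : Pt → ℝ → ℝ) (u : Pt → ℝ → Pt) (p : Pt → ℝ → ℝ) : Prop where
  smooth_rho : ContDiff ℝ (⊤ : ℕ∞) fun q : Pt × ℝ => ρ q.1 q.2
  smooth_u : ContDiff ℝ (⊤ : ℕ∞) fun q : Pt × ℝ => u q.1 q.2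
  smooth_p : ContDiff ℝ (⊤ : ℕ∞) fun q : Pt × ℝ => p q.1 q.2
  per_rho : ∀ t : ℝ, 0 ≤ t → Per2 fun x => ρ x t
  per_u1 : ∀ t : ℝ, 0 ≤ t → Per2 fun x => (u x t).1
  per_u2 : ∀ t : ℝ, 0 ≤ t → Per2 fun x => (u x t).2
  per_p : ∀ t : ℝ, 0 ≤ t → Per2 fun x => p x t
  transport : ∀ x : Pt, ∀ t : ℝ, 0 ≤ t →
    deriv (fun τ => ρ x τ) t
      + (u x t).1 * pd1 (fun y => ρ y t) x + (u x t).2 * pd2 (fun y => ρ y t) x = 0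
  incomp : ∀ x : Pt, ∀ t : ℝ, 0 ≤ t →
    pd1 (fun y => (u y t).1) x + pd2 (fun y => (u y t).2) x = 0
  darcy1 : ∀ x : Pt, ∀ t : ℝ, 0 ≤ t → (u x t).1 + pd1 (fun y => p y t) x = 0
  darcy2 : ∀ x : Pt, ∀ t : ℝ, 0 ≤ t → (u x t).2 + pd2 (fun y => p y t) x = -ρ x t

/-!
Multiplying the transport equation by `x₂` and using `∇·u = 0` and Darcy's law gives the pointwise
identity `x₂ ∂ₜρ + div((x₂ρ + p) u) = -|u|²`. The flux integrates to zero over `[-π,π]²`: `ρ`, `p`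
and `u` are periodic, and `ρ` vanishes on `x₂ = ±π` because it is odd and periodic in `x₂`. Hence
`E' = -∫ |u|²`.

For the bound, `∫ G(ρ)` is conserved for every `C¹` function `G`, since `∂ₜ G(ρ) = -div(G(ρ) u)`.
With `M = sup |ρ₀|` and `G(r) = expNegInvGlue (r² - M²)`, which vanishes exactly on `[-M, M]`,
this gives `|ρ(·,t)| ≤ M`, so `E(t) ≥ -M ∫ |x₂| = -2π³M`; integrating `E'` over `[0,T]` then
bounds `∫₀ᵀ ∫ |u|²` by `E(0) + 2π³M`.
-/

open Set Function

lemma Q2_eq_Icc : Q2 = Icc (-π, -π) (π, π) := Icc_prod_Icc _ _ _ _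

lemma isCompact_Q2 : IsCompact Q2 := isCompact_Icc.prod isCompact_Icc

lemma integral_Q2_abs_snd : ∫ x in Q2, |x.2| = 2 * π ^ 3 := by
  have h_half : ∫ y in (0 : ℝ)..π, |y| = π ^ 2 / 2 := by
    rw [intervalIntegral.integral_congr fun y hy => abs_of_nonneg (uIcc_of_le pi_pos.le ▸ hy).1,
      integral_id]
    ring
  have h_symm : ∫ y in -π..0, |y| = ∫ y in (0 : ℝ)..π, |y| := by
    simpa using (intervalIntegral.integral_comp_neg (a := 0) (b := π) fun y => |y|).symm
  have h_full : ∫ y in Icc (-π) π, |y| = π ^ 2 := by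
    rw [integral_Icc_eq_integral_Ioc, ← intervalIntegral.integral_of_le (by linarith [pi_pos]),
      ← intervalIntegral.integral_add_adjacent_intervals (b := 0)
        (continuous_abs.intervalIntegrable _ _) (continuous_abs.intervalIntegrable _ _),
      h_symm, h_half]
    ring
  have := setIntegral_prod_mul (μ := volume) (ν := volume) (fun _ : ℝ => (1 : ℝ)) (fun y => |y|)
    (Icc (-π) π) (Icc (-π) π)
  simp only [one_mul, ← Measure.volume_eq_prod] at this
  rw [Q2, this, h_full, setIntegral_const, smul_eq_mul, mul_one, Real.volume_real_Icc,
    max_eq_left (by linarith [pi_pos])]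
  ring

theorem abs_integral_Q2_snd_mul_le {f : Pt → ℝ} {M : ℝ}
    (hf : ∀ᵐ x ∂volume.restrict Q2, |f x| ≤ M) :
    |∫ x in Q2, x.2 * f x| ≤ 2 * π ^ 3 * M := by
  have hint : IntegrableOn (fun x : Pt => |x.2| * M) Q2 :=
    (continuous_snd.abs.mul continuous_const).continuousOn.integrableOn_compact isCompact_Q2
  have h := norm_integral_le_of_norm_le hint (hf.mono fun x hx => by
    rw [Real.norm_eq_abs, abs_mul]
    exact mul_le_mul_of_nonneg_left hx (abs_nonneg _))
  rwa [integral_mul_const, integral_Q2_abs_snd, Real.norm_eq_abs] at h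

namespace Per2

variable {f : Pt → ℝ}

lemma apply_pi_left (hf : Per2 f) (y : ℝ) : f (π, y) = f (-π, y) := by
  simpa [show -π + 2 * π = π by ring] using (hf (-π, y)).1

lemma apply_pi_right (hf : Per2 f) (x : ℝ) : f (x, π) = f (x, -π) := by
  simpa [show -π + 2 * π = π by ring] using (hf (x, -π)).2

lemma apply_pi_right_eq_zero (hf : Per2 f) (hodd : ∀ x : Pt, f (x.1, -x.2) = -f x) (x : ℝ) :
    f (x, π) = 0 := by
  linarith [hf.apply_pi_right x, hodd (x, π)]

lemma apply_neg_pi_right_eq_zero (hf : Per2 f) (hodd : ∀ x : Pt, f (x.1, -x.2) = -f x) (x : ℝ) :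
    f (x, -π) = 0 := by
  rw [← hf.apply_pi_right, hf.apply_pi_right_eq_zero hodd]

lemma exists_mem_Q2_eq (hf : Per2 f) (x : Pt) : ∃ y ∈ Q2, f x = f y := by
  have hmem : ∀ a ∈ Ico (-π) (-π + 2 * π), a ∈ Icc (-π) π := fun a ha =>
    ⟨ha.1, by linarith [ha.2]⟩
  have hper₁ : Periodic (fun a => f (a, x.2)) (2 * π) := fun a => (hf (a, x.2)).1
  obtain ⟨a, ha, hfa⟩ := hper₁.exists_mem_Ico two_pi_pos x.1 (-π)
  have hper₂ : Periodic (fun b => f (a, b)) (2 * π) := fun b => (hf (a, b)).2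
  obtain ⟨b, hb, hfb⟩ := hper₂.exists_mem_Ico two_pi_pos x.2 (-π)
  exact ⟨(a, b), ⟨hmem a ha, hmem b hb⟩, hfa.trans hfb⟩

lemma bddAbove_range_abs (hf : Per2 f) (hc : Continuous f) :
    BddAbove (range fun x => |f x|) := by
  refine (isCompact_Q2.image hc.abs).bddAbove.mono ?_
  rintro _ ⟨x, rfl⟩
  obtain ⟨y, hy, hxy⟩ := hf.exists_mem_Q2_eq x
  exact ⟨y, hy, by simp [hxy]⟩

end Per2

section PartialDeriv

variable {f : Pt → ℝ} {x : Pt}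

lemma hasDerivAt_fderiv_fst (hf : DifferentiableAt ℝ f x) :
    HasDerivAt (fun y => f (y, x.2)) (fderiv ℝ f x (1, 0)) x.1 :=
  hf.hasFDerivAt.comp_hasDerivAt x.1 ((hasDerivAt_id _).prodMk (hasDerivAt_const _ _))

lemma hasDerivAt_fderiv_snd (hf : DifferentiableAt ℝ f x) :
    HasDerivAt (fun y => f (x.1, y)) (fderiv ℝ f x (0, 1)) x.2 :=
  hf.hasFDerivAt.comp_hasDerivAt x.2 ((hasDerivAt_const _ _).prodMk (hasDerivAt_id _))

lemma pd1_eq_fderiv (hf : DifferentiableAt ℝ f x) : pd1 f x = fderiv ℝ f x (1, 0) :=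
  (hasDerivAt_fderiv_fst hf).deriv

lemma pd2_eq_fderiv (hf : DifferentiableAt ℝ f x) : pd2 f x = fderiv ℝ f x (0, 1) :=
  (hasDerivAt_fderiv_snd hf).deriv

lemma hasDerivAt_pd1 (hf : DifferentiableAt ℝ f x) :
    HasDerivAt (fun y => f (y, x.2)) (pd1 f x) x.1 :=
  pd1_eq_fderiv hf ▸ hasDerivAt_fderiv_fst hf

lemma hasDerivAt_pd2 (hf : DifferentiableAt ℝ f x) :
    HasDerivAt (fun y => f (x.1, y)) (pd2 f x) x.2 :=
  pd2_eq_fderiv hf ▸ hasDerivAt_fderiv_snd hf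

end PartialDeriv

section TimeDeriv

variable {E : Type*} [NormedAddCommGroup E] [NormedSpace ℝ E] {f : E → ℝ → ℝ}

lemma ContDiff.hasDerivAt_deriv_snd (hf : ContDiff ℝ 1 fun q : E × ℝ => f q.1 q.2)
    (x : E) (t : ℝ) : HasDerivAt (f x) (deriv (f x) t) t :=
  ((hf.differentiable one_ne_zero).comp (differentiable_const x |>.prodMk differentiable_id)
    t).hasDerivAt

lemma ContDiff.continuous_deriv_snd (hf : ContDiff ℝ 1 fun q : E × ℝ => f q.1 q.2) :
    Continuous fun q : E × ℝ => deriv (f q.1) q.2 := by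
  have h : ∀ q : E × ℝ, deriv (f q.1) q.2 = fderiv ℝ (fun q : E × ℝ => f q.1 q.2) q (0, 1) :=
    fun q => by
      have hγ : HasDerivAt (fun τ : ℝ => (q.1, τ)) ((0, 1) : E × ℝ) q.2 :=
        (hasDerivAt_const _ q.1).prodMk (hasDerivAt_id q.2)
      exact ((hf.differentiable one_ne_zero q).hasFDerivAt.comp_hasDerivAt q.2 hγ).deriv
  simpa only [h] using (hf.continuous_fderiv one_ne_zero).clm_apply continuous_const

end TimeDeriv

theorem hasDerivAt_setIntegral_of_continuous {X : Type*} [TopologicalSpace X] [T2Space X]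
    [MeasurableSpace X] [OpensMeasurableSpace X] {μ : Measure X} [IsFiniteMeasureOnCompacts μ]
    {K : Set X} (hK : IsCompact K) {f f' : X → ℝ → ℝ}
    (hf : Continuous fun q : X × ℝ => f q.1 q.2) (hf' : Continuous fun q : X × ℝ => f' q.1 q.2)
    (hd : ∀ x t, HasDerivAt (f x) (f' x t) t) (t : ℝ) :
    HasDerivAt (fun τ => ∫ x in K, f x τ ∂μ) (∫ x in K, f' x t ∂μ) t := by
  obtain ⟨C, hC⟩ := (hK.prod (isCompact_closedBall t 1)).exists_bound_of_continuousOn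
    hf'.continuousOn
  have hslice : ∀ τ : ℝ, Continuous fun x => f x τ := fun τ =>
    hf.comp (continuous_id.prodMk continuous_const)
  refine (hasDerivAt_integral_of_dominated_loc_of_deriv_le (bound := fun _ => C)
    (Metric.ball_mem_nhds t one_pos) (Eventually.of_forall fun τ => (hslice τ).aestronglyMeasurable)
    ((hslice t).continuousOn.integrableOn_compact hK)
    (hf'.comp (continuous_id.prodMk continuous_const)).aestronglyMeasurable
    ?_ (integrableOn_const hK.measure_lt_top.ne)
    (Eventually.of_forall fun x τ _ => hd x τ)).2
  refine (ae_restrict_iff' hK.measurableSet).2 (Eventually.of_forall fun x hx τ hτ => ?_)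
  exact hC (x, τ) ⟨hx, Metric.ball_subset_closedBall hτ⟩

theorem integral_Q2_add_pd1_add_pd2 {f F G : Pt → ℝ} (hf : IntegrableOn f Q2)
    (hF : ContDiff ℝ 1 F) (hG : ContDiff ℝ 1 G) (hF_bdry : ∀ y, F (π, y) = F (-π, y))
    (hG_bdry : ∀ x, G (x, π) = G (x, -π)) :
    ∫ x in Q2, (f x + (pd1 F x + pd2 G x)) = ∫ x in Q2, f x := by
  have hF' := hF.differentiable one_ne_zero
  have hG' := hG.differentiable one_ne_zero
  have hdiv_eq : (fun x => pd1 F x + pd2 G x)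
      = fun x => fderiv ℝ F x (1, 0) + fderiv ℝ G x (0, 1) :=
    funext fun x => by rw [pd1_eq_fderiv (hF' x), pd2_eq_fderiv (hG' x)]
  have hdiv_int : IntegrableOn (fun x => pd1 F x + pd2 G x) Q2 := by
    rw [hdiv_eq]
    exact (((hF.continuous_fderiv one_ne_zero).clm_apply continuous_const).add
      ((hG.continuous_fderiv one_ne_zero).clm_apply continuous_const)).continuousOn
      |>.integrableOn_compact isCompact_Q2
  have hdiv := integral_divergence_prod_Icc_of_hasFDerivAt_of_le F G (fderiv ℝ F) (fderiv ℝ G)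
    (-π, -π) (π, π) (by simp [pi_pos.le]) hF.continuous.continuousOn hG.continuous.continuousOn
    (fun x _ => (hF' x).hasFDerivAt) (fun x _ => (hG' x).hasFDerivAt)
    (Q2_eq_Icc ▸ hdiv_eq ▸ hdiv_int)
  rw [integral_add hf hdiv_int, hdiv_eq, Q2_eq_Icc, hdiv]
  simp only [hF_bdry, hG_bdry, sub_self, add_sub_cancel_right, add_zero]

theorem lintegral_Ioi_le_of_setIntegral_Ioc_le {φ : ℝ → ℝ} (hφ : Continuous φ)
    (hφ_nonneg : ∀ t, 0 ≤ φ t) {a B : ℝ} (hB : ∀ b, a ≤ b → ∫ t in Ioc a b, φ t ≤ B) :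
    ∫⁻ t in Ioi a, ENNReal.ofReal (φ t) ≤ ENNReal.ofReal B := by
  have hunion : Ioi a = ⋃ n : ℕ, Ioc a (a + n) := by
    refine (iUnion_Ioc_eq_Ioi_self_iff.2 fun x _ => ?_).symm
    obtain ⟨n, hn⟩ := exists_nat_ge (x - a)
    exact ⟨n, by linarith⟩
  have hdir : Directed (· ⊆ ·) fun n : ℕ => Ioc a (a + n) :=
    Monotone.directed_le fun m n hmn => Ioc_subset_Ioc_right (by gcongr)
  rw [hunion, setLIntegral_iUnion_of_directed _ hdir]
  refine iSup_le fun n => ?_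
  rw [← ofReal_integral_eq_lintegral_ofReal
    (hφ.integrableOn_Icc.mono_set Ioc_subset_Icc_self) (Eventually.of_forall hφ_nonneg)]
  exact ENNReal.ofReal_le_ofReal (hB _ (by simp))

namespace IsIPMSolT2

variable {ρ : Pt → ℝ → ℝ} {u : Pt → ℝ → Pt} {p : Pt → ℝ → ℝ} 

lemma contDiff_rho_uncurry (hs : IsIPMSolT2 ρ u p) : ContDiff ℝ 1 fun q : Pt × ℝ => ρ q.1 q.2 :=
  hs.smooth_rho.of_le (by norm_num)

lemma contDiff_rho (hs : IsIPMSolT2 ρ u p) (t : ℝ) : ContDiff ℝ 1 fun x => ρ x t :=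
  hs.contDiff_rho_uncurry.comp (contDiff_prodMk_left t)

lemma contDiff_u₁ (hs : IsIPMSolT2 ρ u p) (t : ℝ) : ContDiff ℝ 1 fun x => (u x t).1 :=
  contDiff_fst.comp ((hs.smooth_u.of_le (by norm_num)).comp (contDiff_prodMk_left t))

lemma contDiff_u₂ (hs : IsIPMSolT2 ρ u p) (t : ℝ) : ContDiff ℝ 1 fun x => (u x t).2 :=
  contDiff_snd.comp ((hs.smooth_u.of_le (by norm_num)).comp (contDiff_prodMk_left t))

lemma contDiff_p (hs : IsIPMSolT2 ρ u p) (t : ℝ) : ContDiff ℝ 1 fun x => p x t :=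
  (hs.smooth_p.of_le (by norm_num)).comp (contDiff_prodMk_left t)

lemma snd_mul_deriv_rho_add_div (hs : IsIPMSolT2 ρ u p) {t : ℝ} (ht : 0 ≤ t) (x : Pt) :
    x.2 * deriv (fun τ => ρ x τ) t
      + (pd1 (fun y => (y.2 * ρ y t + p y t) * (u y t).1) x
        + pd2 (fun y => (y.2 * ρ y t + p y t) * (u y t).2) x)
      = -((u x t).1 ^ 2 + (u x t).2 ^ 2) := by
  have hρ := (hs.contDiff_rho t).differentiable one_ne_zero x
  have hp := (hs.contDiff_p t).differentiable one_ne_zero x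
  have hu₁ := (hs.contDiff_u₁ t).differentiable one_ne_zero x
  have hu₂ := (hs.contDiff_u₂ t).differentiable one_ne_zero x
  have h₁ : pd1 (fun y => (y.2 * ρ y t + p y t) * (u y t).1) x
      = (x.2 * pd1 (fun y => ρ y t) x + pd1 (fun y => p y t) x) * (u x t).1
        + (x.2 * ρ x t + p x t) * pd1 (fun y => (u y t).1) x :=
    ((((hasDerivAt_pd1 hρ).const_mul x.2).add (hasDerivAt_pd1 hp)).mul (hasDerivAt_pd1 hu₁)).deriv
  have h₂ : pd2 (fun y => (y.2 * ρ y t + p y t) * (u y t).2) x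
      = (1 * ρ x t + x.2 * pd2 (fun y => ρ y t) x + pd2 (fun y => p y t) x) * (u x t).2
        + (x.2 * ρ x t + p x t) * pd2 (fun y => (u y t).2) x :=
    ((((hasDerivAt_id' x.2).mul (hasDerivAt_pd2 hρ)).add (hasDerivAt_pd2 hp)).mul
      (hasDerivAt_pd2 hu₂)).deriv
  rw [h₁, h₂]
  linear_combination x.2 * hs.transport x t ht + (x.2 * ρ x t + p x t) * hs.incomp x t ht
    + (u x t).1 * hs.darcy1 x t ht + (u x t).2 * hs.darcy2 x t ht

lemma deriv_comp_rho_mul_deriv_rho_add_div (hs : IsIPMSolT2 ρ u p) {G : ℝ → ℝ}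
    (hG : ContDiff ℝ 1 G) {t : ℝ} (ht : 0 ≤ t) (x : Pt) :
    deriv G (ρ x t) * deriv (fun τ => ρ x τ) t
      + (pd1 (fun y => G (ρ y t) * (u y t).1) x + pd2 (fun y => G (ρ y t) * (u y t).2) x)
      = 0 := by
  have hG' := (hG.differentiable one_ne_zero (ρ x t)).hasDerivAt
  have hρ := (hs.contDiff_rho t).differentiable one_ne_zero x
  have hu₁ := (hs.contDiff_u₁ t).differentiable one_ne_zero x
  have hu₂ := (hs.contDiff_u₂ t).differentiable one_ne_zero x
  have h₁ : pd1 (fun y => G (ρ y t) * (u y t).1) x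
      = deriv G (ρ x t) * pd1 (fun y => ρ y t) x * (u x t).1
        + G (ρ x t) * pd1 (fun y => (u y t).1) x :=
    ((hG'.comp x.1 (hasDerivAt_pd1 hρ)).mul (hasDerivAt_pd1 hu₁)).deriv
  have h₂ : pd2 (fun y => G (ρ y t) * (u y t).2) x
      = deriv G (ρ x t) * pd2 (fun y => ρ y t) x * (u x t).2
        + G (ρ x t) * pd2 (fun y => (u y t).2) x :=
    ((hG'.comp x.2 (hasDerivAt_pd2 hρ)).mul (hasDerivAt_pd2 hu₂)).deriv
  rw [h₁, h₂]
  linear_combination deriv G (ρ x t) * hs.transport x t ht + G (ρ x t) * hs.incomp x t ht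

lemma hasDerivAt_rho (hs : IsIPMSolT2 ρ u p) (x : Pt) (t : ℝ) :
    HasDerivAt (fun τ => ρ x τ) (deriv (fun τ => ρ x τ) t) t :=
  hs.contDiff_rho_uncurry.hasDerivAt_deriv_snd x t

lemma continuous_deriv_rho (hs : IsIPMSolT2 ρ u p) :
    Continuous fun q : Pt × ℝ => deriv (fun τ => ρ q.1 τ) q.2 :=
  hs.contDiff_rho_uncurry.continuous_deriv_snd

lemma integral_snd_mul_deriv_rho (hs : IsIPMSolT2 ρ u p)
    (hodd : ∀ x : Pt, ∀ t : ℝ, 0 ≤ t → ρ (x.1, -x.2) t = -ρ x t) {t : ℝ} (ht : 0 ≤ t) :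
    ∫ x in Q2, x.2 * deriv (fun τ => ρ x τ) t = -∫ x in Q2, ((u x t).1 ^ 2 + (u x t).2 ^ 2) := by
  have hρ := hs.contDiff_rho t
  have hp := hs.contDiff_p t
  have hu₁ := hs.contDiff_u₁ t
  have hu₂ := hs.contDiff_u₂ t
  have hρ_per := hs.per_rho t ht
  have hρ_odd : ∀ x : Pt, ρ (x.1, -x.2) t = -ρ x t := fun x => hodd x t ht
  have hint : IntegrableOn (fun x : Pt => x.2 * deriv (fun τ => ρ x τ) t) Q2 :=
    (continuous_snd.mul (hs.continuous_deriv_rho.comp (continuous_id.prodMk continuous_const))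
      ).continuousOn.integrableOn_compact isCompact_Q2
  rw [← integral_Q2_add_pd1_add_pd2 hint (F := fun y => (y.2 * ρ y t + p y t) * (u y t).1)
    (G := fun y => (y.2 * ρ y t + p y t) * (u y t).2) (by fun_prop) (by fun_prop)]
  · simp only [hs.snd_mul_deriv_rho_add_div ht, integral_neg]
  · intro y
    simp only [hρ_per.apply_pi_left y, (hs.per_p t ht).apply_pi_left y,
      (hs.per_u1 t ht).apply_pi_left y]
  · intro x
    simp only [hρ_per.apply_pi_right_eq_zero hρ_odd x, hρ_per.apply_neg_pi_right_eq_zero hρ_odd x,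
      (hs.per_p t ht).apply_pi_right x, (hs.per_u2 t ht).apply_pi_right x, mul_zero]

lemma hasDerivAt_energy (hs : IsIPMSolT2 ρ u p)
    (hodd : ∀ x : Pt, ∀ t : ℝ, 0 ≤ t → ρ (x.1, -x.2) t = -ρ x t) {t : ℝ} (ht : 0 ≤ t) :
    HasDerivAt (fun τ => ∫ x in Q2, x.2 * ρ x τ)
      (-∫ x in Q2, ((u x t).1 ^ 2 + (u x t).2 ^ 2)) t := by
  rw [← hs.integral_snd_mul_deriv_rho hodd ht]
  exact hasDerivAt_setIntegral_of_continuous isCompact_Q2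
    (continuous_fst.snd.mul hs.smooth_rho.continuous)
    (continuous_fst.snd.mul hs.continuous_deriv_rho)
    (fun x τ => (hs.hasDerivAt_rho x τ).const_mul x.2) t

lemma integral_comp_rho_eq (hs : IsIPMSolT2 ρ u p) {G : ℝ → ℝ} (hG : ContDiff ℝ 1 G) {t : ℝ}
    (ht : 0 ≤ t) : ∫ x in Q2, G (ρ x t) = ∫ x in Q2, G (ρ x 0) := by
  have hderiv : ∀ τ, HasDerivAt (fun σ => ∫ x in Q2, G (ρ x σ))
      (∫ x in Q2, deriv G (ρ x τ) * deriv (fun σ => ρ x σ) τ) τ :=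
    hasDerivAt_setIntegral_of_continuous isCompact_Q2
      (hG.continuous.comp hs.smooth_rho.continuous)
      (((hG.continuous_deriv le_rfl).comp hs.smooth_rho.continuous).mul hs.continuous_deriv_rho)
      (fun x τ => ((hG.differentiable one_ne_zero _).hasDerivAt).comp τ (hs.hasDerivAt_rho x τ))
  have hzero : ∀ τ, 0 ≤ τ → ∫ x in Q2, deriv G (ρ x τ) * deriv (fun σ => ρ x σ) τ = 0 := by
    intro τ hτ
    have hρ := hs.contDiff_rho τ
    have hu₁ := hs.contDiff_u₁ τ
    have hu₂ := hs.contDiff_u₂ τ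
    have hρ_per := hs.per_rho τ hτ
    have hint : IntegrableOn (fun x => deriv G (ρ x τ) * deriv (fun σ => ρ x σ) τ) Q2 :=
      (((hG.continuous_deriv le_rfl).comp hρ.continuous).mul
        (hs.continuous_deriv_rho.comp (continuous_id.prodMk continuous_const))
        ).continuousOn.integrableOn_compact isCompact_Q2
    rw [← integral_Q2_add_pd1_add_pd2 hint (F := fun y => G (ρ y τ) * (u y τ).1)
      (G := fun y => G (ρ y τ) * (u y τ).2) (by fun_prop) (by fun_prop)]
    · simp only [hs.deriv_comp_rho_mul_deriv_rho_add_div hG hτ, integral_zero]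
    · intro y
      simp only [hρ_per.apply_pi_left y, (hs.per_u1 τ hτ).apply_pi_left y]
    · intro x
      simp only [hρ_per.apply_pi_right x, (hs.per_u2 τ hτ).apply_pi_right x]
  refine constant_of_has_deriv_right_zero (fun τ _ => (hderiv τ).continuousAt.continuousWithinAt)
    (fun τ hτ => ?_) t ⟨ht, le_rfl⟩
  exact hzero τ hτ.1 ▸ (hderiv τ).hasDerivWithinAt

lemma ae_abs_rho_le (hs : IsIPMSolT2 ρ u p) {M : ℝ} (hM : ∀ x, |ρ x 0| ≤ M) {t : ℝ}
    (ht : 0 ≤ t) : ∀ᵐ x ∂volume.restrict Q2, |ρ x t| ≤ M := by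
  set G : ℝ → ℝ := fun r => expNegInvGlue (r ^ 2 - M ^ 2)
  have hG : ContDiff ℝ 1 G := expNegInvGlue.contDiff.comp (by fun_prop)
  have hM₀ : 0 ≤ M := (abs_nonneg _).trans (hM 0)
  have hG_zero : ∫ x in Q2, G (ρ x t) = 0 := by
    rw [hs.integral_comp_rho_eq hG ht]
    refine integral_eq_zero_of_ae (Eventually.of_forall fun x => ?_)
    simpa [G] using sq_le_sq' (abs_le.1 (hM x)).1 (abs_le.1 (hM x)).2
  have hG_int : IntegrableOn (fun x => G (ρ x t)) Q2 :=
    (hG.continuous.comp (hs.contDiff_rho t).continuous).continuousOn.integrableOn_compact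
      isCompact_Q2
  filter_upwards [(integral_eq_zero_iff_of_nonneg (fun x => expNegInvGlue.nonneg _) hG_int).1
    hG_zero] with x hx
  exact abs_le_of_sq_le_sq (by simpa [G] using hx) hM₀

lemma neg_le_energy (hs : IsIPMSolT2 ρ u p) {M : ℝ} (hM : ∀ x, |ρ x 0| ≤ M) {t : ℝ}
    (ht : 0 ≤ t) : -(2 * π ^ 3 * M) ≤ ∫ x in Q2, x.2 * ρ x t :=
  neg_le_of_abs_le (abs_integral_Q2_snd_mul_le (hs.ae_abs_rho_le hM ht))

lemma continuous_integral_Q2_sq_u (hs : IsIPMSolT2 ρ u p) :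
    Continuous fun t => ∫ x in Q2, ((u x t).1 ^ 2 + (u x t).2 ^ 2) := by
  have hu : Continuous fun q : ℝ × Pt => u q.2 q.1 := hs.smooth_u.continuous.comp continuous_swap
  exact continuous_parametric_integral_of_continuous ((hu.fst.pow 2).add (hu.snd.pow 2))
    isCompact_Q2

end IsIPMSolT2

theorem ipm_torus_energy_general
    (ρ₀ : Pt → ℝ)
    (ρ : Pt → ℝ → ℝ) (u : Pt → ℝ → Pt) (p : Pt → ℝ → ℝ)
    (hsol : IsIPMSolT2 ρ u p)
    (hinit : ∀ x : Pt, ρ x 0 = ρ₀ x)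
    (hodd : ∀ x : Pt, ∀ t : ℝ, 0 ≤ t → ρ (x.1, -x.2) t = -ρ x t) :
    (∀ t : ℝ, 0 ≤ t →
        HasDerivWithinAt (fun τ => ∫ x in Q2, x.2 * ρ x τ)
          (-(∫ x in Q2, ((u x t).1 ^ 2 + (u x t).2 ^ 2))) (Set.Ici 0) t)
    ∧ AntitoneOn (fun τ => ∫ x in Q2, x.2 * ρ x τ) (Set.Ici 0)
    ∧ ∫⁻ t in Set.Ioi (0 : ℝ),
          ENNReal.ofReal (∫ x in Q2, ((u x t).1 ^ 2 + (u x t).2 ^ 2))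
        ≤ ENNReal.ofReal ((∫ x in Q2, x.2 * ρ₀ x) + 2 * π ^ 3 * ⨆ x : Pt, |ρ₀ x|) := by
  set E : ℝ → ℝ := fun τ => ∫ x in Q2, x.2 * ρ x τ
  set φ : ℝ → ℝ := fun τ => ∫ x in Q2, ((u x τ).1 ^ 2 + (u x τ).2 ^ 2)
  have hE : ∀ t, 0 ≤ t → HasDerivAt E (-φ t) t := fun t ht => hsol.hasDerivAt_energy hodd ht
  have hφ_nonneg : ∀ t, 0 ≤ φ t := fun t => integral_nonneg fun x => by positivity
  have hφ : Continuous φ := hsol.continuous_integral_Q2_sq_u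
  have hρ₀_bdd : BddAbove (range fun x => |ρ₀ x|) := by
    simpa only [hinit] using
      (hsol.per_rho 0 le_rfl).bddAbove_range_abs (hsol.contDiff_rho 0).continuous
  have hE_lower : ∀ T, 0 ≤ T → -(2 * π ^ 3 * ⨆ x : Pt, |ρ₀ x|) ≤ E T := fun T hT =>
    hsol.neg_le_energy (fun x => hinit x ▸ le_ciSup hρ₀_bdd x) hT
  refine ⟨fun t ht => (hE t ht).hasDerivWithinAt, ?_, ?_⟩
  · exact antitoneOn_of_hasDerivWithinAt_nonpos (convex_Ici 0)
      (fun t ht => (hE t ht).continuousAt.continuousWithinAt)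
      (fun t ht => (hE t (interior_subset ht)).hasDerivWithinAt)
      (fun t _ => neg_nonpos.2 (hφ_nonneg t))
  · refine lintegral_Ioi_le_of_setIntegral_Ioc_le hφ hφ_nonneg fun T hT => ?_
    have hftc : ∫ t in (0 : ℝ)..T, -φ t = E T - E 0 :=
      intervalIntegral.integral_eq_sub_of_hasDerivAt
        (fun t ht => hE t (uIcc_of_le hT ▸ ht).1) (hφ.neg.intervalIntegrable _ _)
    have hE₀ : E 0 = ∫ x in Q2, x.2 * ρ₀ x := by simp only [E, hinit]
    rw [intervalIntegral.integral_neg, intervalIntegral.integral_of_le hT] at hftc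
    linarith [hE_lower T hT]

/-- On the torus, along any global smooth solution of IPM with odd-in-`x₂`
density, `E(t) = ∫_{[-π,π]²} x₂ ρ(x,t) dx` satisfies `E'(t) = -∫_{[-π,π]²} |u(x,t)|² dx` for
`t ≥ 0`; in particular `E` is nonincreasing on `[0,∞)` and
`∫₀^∞ ∫ |u|² dx dt ≤ E(0) + 2π³ sup|ρ₀|`. -/
theorem ipm_torus_energy
    (ρ₀ : Pt → ℝ) (hρ₀smooth : ContDiff ℝ (⊤ : ℕ∞) ρ₀) (hρ₀per : Per2 ρ₀)
    (hρ₀odd : ∀ x : Pt, ρ₀ (x.1, -x.2) = -ρ₀ x)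
    (ρ : Pt → ℝ → ℝ) (u : Pt → ℝ → Pt) (p : Pt → ℝ → ℝ)
    (hsol : IsIPMSolT2 ρ u p)
    (hinit : ∀ x : Pt, ρ x 0 = ρ₀ x)
    (hodd : ∀ x : Pt, ∀ t : ℝ, 0 ≤ t → ρ (x.1, -x.2) t = -ρ x t) :
    (∀ t : ℝ, 0 ≤ t →
        HasDerivWithinAt (fun τ => ∫ x in Q2, x.2 * ρ x τ)
          (-(∫ x in Q2, ((u x t).1 ^ 2 + (u x t).2 ^ 2))) (Set.Ici 0) t)
    ∧ AntitoneOn (fun τ => ∫ x in Q2, x.2 * ρ x τ) (Set.Ici 0)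
    ∧ ∫⁻ t in Set.Ioi (0 : ℝ),
          ENNReal.ofReal (∫ x in Q2, ((u x t).1 ^ 2 + (u x t).2 ^ 2))
        ≤ ENNReal.ofReal ((∫ x in Q2, x.2 * ρ₀ x) + 2 * π ^ 3 * ⨆ x : Pt, |ρ₀ x|) :=
  ipm_torus_energy_general ρ₀ ρ u p hsol hinit hodd
end
end

section
/- Let C₁, C₂ > 0 and let g : ℝ² → ℂ be measurable with ∫_{ℝ²} |g(ξ)|² dξ = C₂ and |g(ξ)| ≤ C₁ for almost every ξ. Suppose δ := ∫_{ℝ²} (ξ₁²/|ξ|²) |g(ξ)|² dξ satisfies 0 < δ ≤ C₂/4. Then for every s > 0, ∫_{ℝ²} |ξ|^{2s} |g(ξ)|² dξ ≥ (C₂/4) · ((4C₁)^{−1} C₂^{3/4} δ^{−1/4})^{2s}. -/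
/-!
Split the plane into the exterior `{|ξ| ≥ ρ}` of a ball, the part of the ball inside the cone
`ξ₁² ≤ θ²|ξ|²` around the vertical axis, and the complement of that cone. Off the cone the weight
`ξ₁²/|ξ|²` exceeds `θ²`, so the complement of the cone carries mass at most `δ/θ²`; the ball ∩ cone
lies in a `2θρ × 2ρ` rectangle, so it carries mass at most `4θρ²C₁²`. For `θ = 2√(δ/C₂)` and the
radius `ρ` of the statement these bounds are `C₂/4` and `C₂/2`, so mass at least `C₂/4` lies where
`|ξ|^{2s} ≥ ρ^{2s}`.
-/

open Real MeasureTheory Filter Topology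
open scoped ENNReal NNReal

noncomputable section

section

variable {α : Type*} [MeasurableSpace α] {μ : Measure α} {f w : α → ℝ} {s t : Set α}

theorem mul_setIntegral_le_integral_mul_of_le {c : ℝ} (hs : MeasurableSet s)
    (hf : Integrable f μ) (hwf : Integrable (fun x ↦ w x * f x) μ) (hf0 : 0 ≤ f) (hw0 : 0 ≤ w)
    (hc : ∀ x ∈ s, c ≤ w x) :
    c * ∫ x in s, f x ∂μ ≤ ∫ x, w x * f x ∂μ := by
  rw [← integral_const_mul]
  calc ∫ x in s, c * f x ∂μ ≤ ∫ x in s, w x * f x ∂μ :=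
        setIntegral_mono_on (hf.const_mul c).integrableOn hwf.integrableOn hs
          fun x hx ↦ mul_le_mul_of_nonneg_right (hc x hx) (hf0 x)
    _ ≤ ∫ x, w x * f x ∂μ :=
        setIntegral_le_integral hwf (ae_of_all _ fun x ↦ mul_nonneg (hw0 x) (hf0 x))

theorem integral_le_setIntegral_add_compl_inter_add_compl (hs : MeasurableSet s)
    (ht : MeasurableSet t) (hf : Integrable f μ) (hf0 : 0 ≤ f) :
    ∫ x, f x ∂μ ≤ ∫ x in s, f x ∂μ + ∫ x in sᶜ ∩ t, f x ∂μ + ∫ x in tᶜ, f x ∂μ := by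
  have hsc : ∫ x in sᶜ ∩ t, f x ∂μ + ∫ x in sᶜ \ t, f x ∂μ = ∫ x in sᶜ, f x ∂μ :=
    integral_inter_add_sdiff ht hf.integrableOn
  have hsdiff : ∫ x in sᶜ \ t, f x ∂μ ≤ ∫ x in tᶜ, f x ∂μ :=
    setIntegral_mono_set hf.integrableOn (ae_of_all _ hf0)
      (Set.sdiff_subset_compl sᶜ t).eventuallyLE
  linarith [integral_add_compl hs hf]

theorem ofReal_mul_setIntegral_le_lintegral {W : α → ℝ} {c : ℝ} (hs : MeasurableSet s)
    (hf : IntegrableOn f s μ) (hf0 : 0 ≤ f) (hc : 0 ≤ c) (hW : ∀ x ∈ s, c ≤ W x) :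
    ENNReal.ofReal (c * ∫ x in s, f x ∂μ) ≤ ∫⁻ x, ENNReal.ofReal (W x * f x) ∂μ := by
  rw [← integral_const_mul, ofReal_integral_eq_lintegral_ofReal (hf.const_mul c)
    (ae_of_all _ fun x ↦ mul_nonneg hc (hf0 x))]
  calc ∫⁻ x in s, ENNReal.ofReal (c * f x) ∂μ ≤ ∫⁻ x in s, ENNReal.ofReal (W x * f x) ∂μ :=
        setLIntegral_mono' hs fun x hx ↦
          ENNReal.ofReal_le_ofReal (mul_le_mul_of_nonneg_right (hW x hx) (hf0 x))
    _ ≤ ∫⁻ x, ENNReal.ofReal (W x * f x) ∂μ := setLIntegral_le_lintegral _ _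

end

theorem volume_ball_inter_cone_le {θ ρ : ℝ} (hθ : 0 ≤ θ) (hρ : 0 ≤ ρ) :
    volume ({ξ : Pt | ρ ^ 2 ≤ ξ.1 ^ 2 + ξ.2 ^ 2}ᶜ ∩ {ξ | ξ.1 ^ 2 ≤ θ ^ 2 * (ξ.1 ^ 2 + ξ.2 ^ 2)})
      ≤ ENNReal.ofReal (4 * θ * ρ ^ 2) := by
  have hrect : {ξ : Pt | ρ ^ 2 ≤ ξ.1 ^ 2 + ξ.2 ^ 2}ᶜ ∩ {ξ | ξ.1 ^ 2 ≤ θ ^ 2 * (ξ.1 ^ 2 + ξ.2 ^ 2)}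
      ⊆ Set.Icc (-(θ * ρ)) (θ * ρ) ×ˢ Set.Icc (-ρ) ρ := by
    rintro ⟨x, y⟩ ⟨hball, hcone⟩
    simp only [Set.mem_compl_iff, Set.mem_ofPred_eq, not_le] at hball hcone
    have hx : x ^ 2 ≤ (θ * ρ) ^ 2 := by nlinarith [sq_nonneg θ]
    have hy : y ^ 2 ≤ ρ ^ 2 := by nlinarith [sq_nonneg x]
    exact ⟨abs_le_of_sq_le_sq' hx (mul_nonneg hθ hρ), abs_le_of_sq_le_sq' hy hρ⟩
  calc _ ≤ volume (Set.Icc (-(θ * ρ)) (θ * ρ) ×ˢ Set.Icc (-ρ) ρ) := measure_mono hrect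
    _ = ENNReal.ofReal (4 * θ * ρ ^ 2) := by
      rw [Measure.volume_eq_prod, Measure.prod_prod, Real.volume_Icc, Real.volume_Icc,
        ← ENNReal.ofReal_mul (by linarith [mul_nonneg hθ hρ])]
      ring_nf

theorem integrable_fst_sq_div_mul {f : Pt → ℝ} (hf : Integrable f) (hf0 : 0 ≤ f) :
    Integrable fun ξ : Pt ↦ ξ.1 ^ 2 / (ξ.1 ^ 2 + ξ.2 ^ 2) * f ξ := by
  refine hf.mono' (Measurable.aestronglyMeasurable (by fun_prop) |>.mul hf.1)
    (ae_of_all _ fun ξ ↦ ?_)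
  rw [norm_mul, Real.norm_of_nonneg (hf0 ξ), Real.norm_of_nonneg (by positivity)]
  exact mul_le_of_le_one_left (hf0 ξ)
    (div_le_one_of_le₀ (le_add_of_nonneg_right (sq_nonneg _)) (by positivity))

theorem sub_le_setIntegral_outside_ball {f : Pt → ℝ} {C θ ρ : ℝ} (hf : Integrable f)
    (hf0 : 0 ≤ f) (hC : 0 ≤ C) (hfC : ∀ᵐ ξ, f ξ ≤ C) (hθ : 0 < θ) (hρ : 0 ≤ ρ) :
    (∫ ξ, f ξ) - C * (4 * θ * ρ ^ 2) - (∫ ξ, ξ.1 ^ 2 / (ξ.1 ^ 2 + ξ.2 ^ 2) * f ξ) / θ ^ 2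
      ≤ ∫ ξ in {ξ : Pt | ρ ^ 2 ≤ ξ.1 ^ 2 + ξ.2 ^ 2}, f ξ := by
  set outside := {ξ : Pt | ρ ^ 2 ≤ ξ.1 ^ 2 + ξ.2 ^ 2}
  set cone := {ξ : Pt | ξ.1 ^ 2 ≤ θ ^ 2 * (ξ.1 ^ 2 + ξ.2 ^ 2)}
  have houtside : MeasurableSet outside := measurableSet_le measurable_const (by fun_prop)
  have hcone : MeasurableSet cone := measurableSet_le (by fun_prop) (by fun_prop)
  have hvol := volume_ball_inter_cone_le hθ.le hρ
  have hnear : ∫ ξ in outsideᶜ ∩ cone, f ξ ≤ C * (4 * θ * ρ ^ 2) := by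
    calc ∫ ξ in outsideᶜ ∩ cone, f ξ ≤ C * volume.real (outsideᶜ ∩ cone) :=
          (le_norm_self _).trans <| norm_setIntegral_le_of_norm_le_const_ae'
            (hvol.trans_lt ENNReal.ofReal_lt_top)
            (hfC.mono fun ξ hξ _ ↦ (Real.norm_of_nonneg (hf0 ξ)).trans_le hξ)
      _ ≤ C * (4 * θ * ρ ^ 2) := by
        gcongr
        exact ENNReal.toReal_le_of_le_ofReal (by positivity) hvol
  have hfar : ∫ ξ in coneᶜ, f ξ ≤ (∫ ξ, ξ.1 ^ 2 / (ξ.1 ^ 2 + ξ.2 ^ 2) * f ξ) / θ ^ 2 := by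
    refine (le_div_iff₀' (by positivity)).mpr <|
      mul_setIntegral_le_integral_mul_of_le hcone.compl hf (integrable_fst_sq_div_mul hf hf0) hf0
        (fun ξ ↦ by positivity) fun ξ hξ ↦ ?_
    simp only [cone, Set.mem_compl_iff, Set.mem_ofPred_eq, not_le] at hξ
    have hpos : 0 < ξ.1 ^ 2 + ξ.2 ^ 2 := by nlinarith [sq_nonneg ξ.2]
    exact (le_div_iff₀ hpos).mpr hξ.le
  have hsplit := integral_le_setIntegral_add_compl_inter_add_compl houtside hcone hf hf0
  linarith

def coneAperture (C₂ δ : ℝ) : ℝ := 2 * √(δ / C₂)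

def concentrationRadius (C₁ C₂ δ : ℝ) : ℝ := (4 * C₁)⁻¹ * C₂ ^ (3/4 : ℝ) * δ ^ (-(1/4) : ℝ)

section Constants

variable {C₁ C₂ δ : ℝ}

theorem coneAperture_pos (hC₂ : 0 < C₂) (hδ : 0 < δ) : 0 < coneAperture C₂ δ := by
  unfold coneAperture
  have := Real.sqrt_pos.mpr (div_pos hδ hC₂)
  positivity

theorem concentrationRadius_pos (hC₁ : 0 < C₁) (hC₂ : 0 < C₂) (hδ : 0 < δ) :
    0 < concentrationRadius C₁ C₂ δ := by
  unfold concentrationRadius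
  have := Real.rpow_pos_of_pos hC₂ (3/4)
  have := Real.rpow_pos_of_pos hδ (-(1/4))
  positivity

theorem div_coneAperture_sq (hC₂ : 0 < C₂) (hδ : 0 < δ) :
    δ / coneAperture C₂ δ ^ 2 = C₂ / 4 := by
  rw [coneAperture, mul_pow, Real.sq_sqrt (div_pos hδ hC₂).le]
  field_simp
  norm_num

theorem sq_mul_four_mul_coneAperture_mul_concentrationRadius_sq (hC₁ : 0 < C₁) (hC₂ : 0 < C₂)
    (hδ : 0 < δ) :
    C₁ ^ 2 * (4 * coneAperture C₂ δ * concentrationRadius C₁ C₂ δ ^ 2) = C₂ / 2 := by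
  have hC₂pow : (C₂ ^ (3/4 : ℝ)) ^ 2 = C₂ * √C₂ := by
    rw [← Real.rpow_mul_natCast hC₂.le, Real.sqrt_eq_rpow,
      ← Real.rpow_one_add' hC₂.le (by norm_num)]
    norm_num
  have hδpow : (δ ^ (-(1/4) : ℝ)) ^ 2 = (√δ)⁻¹ := by
    rw [← Real.rpow_mul_natCast hδ.le, Real.sqrt_eq_rpow, ← Real.rpow_neg hδ.le]
    norm_num
  rw [coneAperture, concentrationRadius, mul_pow, mul_pow, hC₂pow, hδpow, Real.sqrt_div' _ hC₂.le]
  field_simp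
  norm_num

end Constants

theorem fourier_concentration_estimate_general
    (C₁ C₂ : ℝ) (hC₁ : 0 < C₁) (hC₂ : 0 < C₂)
    (g : Pt → ℂ)
    (hint : Integrable fun ξ : Pt => ‖g ξ‖ ^ 2)
    (hL2 : ∫ ξ : Pt, ‖g ξ‖ ^ 2 = C₂)
    (hbd : ∀ᵐ ξ : Pt, ‖g ξ‖ ≤ C₁)
    (δ : ℝ) (hδdef : δ = ∫ ξ : Pt, ξ.1 ^ 2 / (ξ.1 ^ 2 + ξ.2 ^ 2) * ‖g ξ‖ ^ 2)
    (hδpos : 0 < δ)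
    (s : ℝ) (hs : 0 < s) :
    ENNReal.ofReal (C₂ / 4 * ((4 * C₁)⁻¹ * C₂ ^ (3/4 : ℝ) * δ ^ (-(1/4) : ℝ)) ^ (2 * s))
      ≤ ∫⁻ ξ : Pt, ENNReal.ofReal ((ξ.1 ^ 2 + ξ.2 ^ 2) ^ s * ‖g ξ‖ ^ 2) := by
  change ENNReal.ofReal (C₂ / 4 * concentrationRadius C₁ C₂ δ ^ (2 * s)) ≤ _
  set ρ := concentrationRadius C₁ C₂ δ
  have hρ : 0 < ρ := concentrationRadius_pos hC₁ hC₂ hδpos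
  have hmass : C₂ / 4 ≤ ∫ ξ in {ξ : Pt | ρ ^ 2 ≤ ξ.1 ^ 2 + ξ.2 ^ 2}, ‖g ξ‖ ^ 2 := by
    have := sub_le_setIntegral_outside_ball hint (fun ξ ↦ sq_nonneg ‖g ξ‖) (sq_nonneg C₁)
      (hbd.mono fun ξ h ↦ pow_le_pow_left₀ (norm_nonneg _) h 2) (coneAperture_pos hC₂ hδpos) hρ.le
    rw [← hδdef, hL2, sq_mul_four_mul_coneAperture_mul_concentrationRadius_sq hC₁ hC₂ hδpos,
      div_coneAperture_sq hC₂ hδpos] at this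
    linarith
  calc ENNReal.ofReal (C₂ / 4 * ρ ^ (2 * s))
      ≤ ENNReal.ofReal (ρ ^ (2 * s) * ∫ ξ in {ξ : Pt | ρ ^ 2 ≤ ξ.1 ^ 2 + ξ.2 ^ 2}, ‖g ξ‖ ^ 2) := by
        rw [mul_comm]
        gcongr
    _ ≤ _ := ofReal_mul_setIntegral_le_lintegral (measurableSet_le measurable_const (by fun_prop))
        hint.integrableOn (fun ξ ↦ sq_nonneg ‖g ξ‖) (by positivity) fun ξ hξ ↦ by
          rw [Real.rpow_mul hρ.le, Real.rpow_two]
          exact Real.rpow_le_rpow (by positivity) hξ hs.le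

/-- The key Fourier-side estimate: if `g ∈ L²(ℝ²)` has total mass
`∫ |g|² = C₂`, is bounded by `C₁`, and its mass concentrates near the vertical axis in the sense
that `δ = ∫ (ξ₁²/|ξ|²) |g(ξ)|² dξ` satisfies `0 < δ ≤ C₂/4`, then for every `s > 0`,
`∫ |ξ|^{2s} |g(ξ)|² dξ ≥ (C₂/4) ((4C₁)⁻¹ C₂^{3/4} δ^{-1/4})^{2s}`. -/
theorem fourier_concentration_estimate
    (C₁ C₂ : ℝ) (hC₁ : 0 < C₁) (hC₂ : 0 < C₂)
    (g : Pt → ℂ) (hmeas : Measurable g)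
    (hint : Integrable fun ξ : Pt => ‖g ξ‖ ^ 2)
    (hL2 : ∫ ξ : Pt, ‖g ξ‖ ^ 2 = C₂)
    (hbd : ∀ᵐ ξ : Pt, ‖g ξ‖ ≤ C₁)
    (δ : ℝ) (hδdef : δ = ∫ ξ : Pt, ξ.1 ^ 2 / (ξ.1 ^ 2 + ξ.2 ^ 2) * ‖g ξ‖ ^ 2)
    (hδpos : 0 < δ) (hδsmall : δ ≤ C₂ / 4)
    (s : ℝ) (hs : 0 < s) :
    ENNReal.ofReal (C₂ / 4 * ((4 * C₁)⁻¹ * C₂ ^ (3/4 : ℝ) * δ ^ (-(1/4) : ℝ)) ^ (2 * s))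
      ≤ ∫⁻ ξ : Pt, ENNReal.ofReal ((ξ.1 ^ 2 + ξ.2 ^ 2) ^ s * ‖g ξ‖ ^ 2) :=
  fourier_concentration_estimate_general C₁ C₂ hC₁ hC₂ g hint hL2 hbd δ hδdef hδpos s hs
end
end
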